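/- arXiv:0906.4252 — 6 statements merged into one kernel-verified Lean document; each statement's English description precedes it below -/
import Mathlib

section
/- Let A be a unital associative ℂ-algebra and δ ∈ ℂ with δ ≠ 0. Let U₁, U₂, U₃, U₄ ∈ A satisfy the Hecke relations H1–H3 (Uᵢ² = δUᵢ for i = 1,2,3,4; UᵢUⱼ = UⱼUᵢ for |i−j| > 1; UᵢU_{i+1}Uᵢ − Uᵢ = U_{i+1}UᵢU_{i+1} − U_{i+1} for i = 1,2,3) together with the SU(3)-Temperley–Lieb relations (Uᵢ − U_{i+2}U_{i+1}Uᵢ + U_{i+1})(U_{i+1}U_{i+2}U_{i+1} − U_{i+1}) = 0 for i = 1 and i = 2. Set Fᵢ = UᵢU_{i+1}Uᵢ − Uᵢ. Then F₁F₃F₁ = δ·F₁U₄. -/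
/-!
Put `X₁ = F₁U₃F₁ - δ²F₁` and its mirror image `X₂ = F₂U₁F₂ - δ²F₂`. The Hecke relations alone give
`X₁ = (U₂U₁ - 1)F₂(U₁U₂ - 1) - F₁` and `X₂ = (U₂U₃ - 1)F₁(U₃U₂ - 1) - F₂`, and these agree because
`U₁F₂U₁ = U₃F₁U₃`; so `X₁ = X₂` (in the Hecke algebra both are multiples of the four-strand
antisymmetrizer). Multiplying the SU(3) relation at `i = 1` on the left by `U₂` gives `X₂ = 0`, hence
`F₁U₃F₁ = δ²F₁`. Finally `F₃ = U₄U₃U₄ - U₄` and `F₁` commutes with `U₄`, so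
`F₁F₃F₁ = U₄(F₁U₃F₁)U₄ - F₁²U₄ = δ³F₁U₄ - (δ³ - δ)F₁U₄ = δF₁U₄`.
-/

namespace HeckeSU3

section Ring

variable {A : Type*} [Ring A] {u v : A}

/-- `F u v` is the paper's `Fᵢ` for `u = Uᵢ`, `v = U_{i+1}`; the Hecke relation H3 reads
`F u v = F v u`. -/
def F (u v : A) : A := u * v * u - u

theorem F_eq_sub_one_mul (huv : F u v = F v u) : F u v = (v * u - 1) * v := by
  rw [huv, F]; noncomm_ring

theorem F_eq_mul_sub_one (huv : F u v = F v u) : F u v = v * (u * v - 1) := by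
  rw [huv, F]; noncomm_ring

theorem mul_mul_F (huv : F u v = F v u) (w : A) :
    v * u * F v w = F u v * w * v - F u v + F v w := by
  have hvuv : v * u * v = F u v + v := by rw [huv, F]; abel
  calc v * u * F v w = v * u * v * w * v - v * u * v := by rw [F]; noncomm_ring
    _ = F u v * w * v - F u v + F v w := by rw [hvuv]; simp only [F]; noncomm_ring

theorem F_mul_mul (huv : F u v = F v u) (w : A) :
    F v w * u * v = v * w * F u v - F u v + F v w := by
  have hvuv : v * u * v = F u v + v := by rw [huv, F]; abel
  calc F v w * u * v = v * w * (v * u * v) - v * u * v := by rw [F]; noncomm_ring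
    _ = v * w * F u v - F u v + F v w := by rw [hvuv]; simp only [F]; noncomm_ring

end Ring

section Algebra

variable {K A : Type*} [CommRing K] [Ring A] [Algebra K A] {δ : K} {u v w t x : A}

theorem mul_F_eq_smul (hu : u * u = δ • u) (v : A) : u * F u v = δ • F u v := by
  simp only [F, mul_sub, ← mul_assoc, hu, smul_mul_assoc, smul_sub]

theorem F_mul_eq_smul (hu : u * u = δ • u) (v : A) : F u v * u = δ • F u v := by
  simp only [F, sub_mul, mul_assoc, hu, mul_smul_comm, smul_sub]

theorem F_mul_self (hu : u * u = δ • u) (hv : v * v = δ • v) (huv : F u v = F v u) :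
    F u v * F u v = (δ ^ 3 - δ) • F u v := by
  have hFv : F u v * v = δ • F u v := by rw [huv]; exact F_mul_eq_smul hv u
  calc F u v * F u v = F u v * u * v * u - F u v * u := by rw [F]; noncomm_ring
    _ = (δ ^ 3 - δ) • F u v := by
      simp only [F_mul_eq_smul hu, smul_mul_assoc, hFv]; module

theorem mul_F_mul_swap (huw : Commute u w) (hu : u * u = δ • u) (hw : w * w = δ • w) (v : A) :
    w * F u v * w = u * F w v * u := by
  have hwuw : w * u * w = δ • (u * w) := by rw [← huw.eq, mul_assoc, hw, mul_smul_comm]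
  have huwu : u * w * u = δ • (u * w) := by
    rw [mul_assoc, ← huw.eq, ← mul_assoc, hu, smul_mul_assoc]
  calc w * F u v * w = w * u * v * (u * w) - w * u * w := by rw [F]; noncomm_ring
    _ = u * w * v * (w * u) - u * w * u := by rw [hwuw, huwu, huw.eq]
    _ = u * F w v * u := by rw [F]; noncomm_ring

theorem F_mul_mul_F_sub (hu : u * u = δ • u) (hv : v * v = δ • v) (huv : F u v = F v u)
    (w : A) :
    F u v * w * F u v - δ ^ 2 • F u v = (v * u - 1) * F v w * (u * v - 1) - F u v := by
  have hFv : F u v * v = δ • F u v := by rw [huv]; exact F_mul_eq_smul hv u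
  have hFuv : F u v * u * v = δ ^ 2 • F u v := by
    rw [F_mul_eq_smul hu, smul_mul_assoc, hFv, smul_smul, sq]
  have hexpand : F u v * w * F u v = (v * u - 1) * F v w * (u * v - 1) + F u v * u * v - F u v := by
    calc F u v * w * F u v = (v * u - 1) * v * w * (v * (u * v - 1)) := by
          rw [← F_eq_sub_one_mul huv, ← F_eq_mul_sub_one huv]
      _ = (v * u - 1) * F v w * (u * v - 1) + F u v * u * v - F u v := by
          rw [F_eq_sub_one_mul huv, F]; noncomm_ring
  rw [hexpand, hFuv]; abel

theorem sub_one_mul_F_mul_sub_one_sub_F (huw : Commute u w) (hu : u * u = δ • u)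
    (hw : w * w = δ • w) (huv : F u v = F v u) (hvw : F v w = F w v) :
    (v * u - 1) * F v w * (u * v - 1) - F u v = (v * w - 1) * F u v * (w * v - 1) - F v w := by
  have hconj : u * F v w * u = w * F u v * w := by rw [hvw, mul_F_mul_swap huw hu hw]
  calc (v * u - 1) * F v w * (u * v - 1) - F u v
        = v * (u * F v w * u) * v - v * u * F v w - F v w * u * v + F v w - F u v := by
          noncomm_ring
    _ = (v * w - 1) * F u v * (w * v - 1) - F v w := by
          rw [hconj, mul_mul_F huv, F_mul_mul huv]; noncomm_ring

theorem F_mul_mul_F_sub_eq (huw : Commute u w) (hu : u * u = δ • u) (hv : v * v = δ • v)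
    (hw : w * w = δ • w) (huv : F u v = F v u) (hvw : F v w = F w v) :
    F u v * w * F u v - δ ^ 2 • F u v = F v w * u * F v w - δ ^ 2 • F v w := by
  rw [F_mul_mul_F_sub hu hv huv, sub_one_mul_F_mul_sub_one_sub_F huw hu hw huv hvw, hvw,
    F_mul_mul_F_sub hw hv hvw.symm, huv]

theorem F_mul_mul_F_of_mul_F_eq_zero (hv : v * v = δ • v)
    (hs : (u - w * v * u + v) * F v w = 0) :
    F v w * u * F v w = δ ^ 2 • F v w := by
  have hvF : v * F v w = δ • F v w := mul_F_eq_smul hv w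
  have hwvu : w * v * u * F v w = u * F v w + v * F v w := by
    rw [← sub_eq_zero, ← neg_eq_zero, ← hs]; noncomm_ring
  calc F v w * u * F v w = v * (w * v * u * F v w) - v * u * F v w := by rw [F]; noncomm_ring
    _ = δ ^ 2 • F v w := by
      rw [hwvu, mul_add, ← mul_assoc, hvF, mul_smul_comm, hvF, smul_smul, sq]; abel

theorem mul_F_mul_eq_smul (hxt : Commute x t) (ht : t * t = δ • t)
    (hxx : x * x = (δ ^ 3 - δ) • x)
    (hxwx : x * w * x = δ ^ 2 • x) : x * F t w * x = δ • (x * t) := by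
  have htxt : t * x * t = δ • (x * t) := by rw [← hxt.eq, mul_assoc, ht, mul_smul_comm]
  calc x * F t w * x = x * t * w * (t * x) - x * t * x := by rw [F]; noncomm_ring
    _ = t * x * w * (x * t) - t * x * x := by rw [hxt.eq]
    _ = t * (x * w * x) * t - t * (x * x) := by noncomm_ring
    _ = δ • (x * t) := by
      simp only [hxwx, hxx, mul_smul_comm, smul_mul_assoc, htxt]
      rw [← hxt.eq]
      module

end Algebra

end HeckeSU3

open HeckeSU3 in
theorem stmt1_general (A : Type*) [Ring A] [Algebra ℂ A] (δ : ℂ)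
    (U₁ U₂ U₃ U₄ : A)
    (h1 : U₁ * U₁ = δ • U₁) (h2 : U₂ * U₂ = δ • U₂)
    (h3 : U₃ * U₃ = δ • U₃) (h4 : U₄ * U₄ = δ • U₄)
    (c13 : U₁ * U₃ = U₃ * U₁) (c14 : U₁ * U₄ = U₄ * U₁) (c24 : U₂ * U₄ = U₄ * U₂)
    (b1 : U₁ * U₂ * U₁ - U₁ = U₂ * U₁ * U₂ - U₂)
    (b2 : U₂ * U₃ * U₂ - U₂ = U₃ * U₂ * U₃ - U₃)
    (b3 : U₃ * U₄ * U₃ - U₃ = U₄ * U₃ * U₄ - U₄)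
    (s1 : (U₁ - U₃ * U₂ * U₁ + U₂) * (U₂ * U₃ * U₂ - U₂) = 0) :
    (U₁ * U₂ * U₁ - U₁) * (U₃ * U₄ * U₃ - U₃) * (U₁ * U₂ * U₁ - U₁)
      = δ • ((U₁ * U₂ * U₁ - U₁) * U₄) := by
  have hF₁U₃F₁ : F U₁ U₂ * U₃ * F U₁ U₂ = δ ^ 2 • F U₁ U₂ := by
    have h := F_mul_mul_F_sub_eq c13 h1 h2 h3 b1 b2
    rwa [F_mul_mul_F_of_mul_F_eq_zero h2 s1, sub_self, sub_eq_zero] at h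
  have hU₁U₄ : Commute U₁ U₄ := c14
  have hF₁U₄ : Commute (F U₁ U₂) U₄ := ((hU₁U₄.mul_left c24).mul_left hU₁U₄).sub_left hU₁U₄
  have h := mul_F_mul_eq_smul hF₁U₄ h4 (F_mul_self h1 h2 b1) hF₁U₃F₁
  rwa [← show F U₃ U₄ = F U₄ U₃ from b3] at h

/-- Let `A` be a unital associative ℂ-algebra and `δ ∈ ℂ` with `δ ≠ 0`.
Let `U₁, U₂, U₃, U₄ ∈ A` satisfy the Hecke relations H1–H3 together with the
SU(3)-Temperley–Lieb relations at `i = 1` and `i = 2`.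
Set `Fᵢ = UᵢU_{i+1}Uᵢ − Uᵢ`.  Then `F₁F₃F₁ = δ·F₁U₄`. -/
theorem stmt1 (A : Type*) [Ring A] [Algebra ℂ A] (δ : ℂ) (hδ : δ ≠ 0)
    (U₁ U₂ U₃ U₄ : A)
    (h1 : U₁ * U₁ = δ • U₁) (h2 : U₂ * U₂ = δ • U₂)
    (h3 : U₃ * U₃ = δ • U₃) (h4 : U₄ * U₄ = δ • U₄)
    (c13 : U₁ * U₃ = U₃ * U₁) (c14 : U₁ * U₄ = U₄ * U₁) (c24 : U₂ * U₄ = U₄ * U₂)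
    (b1 : U₁ * U₂ * U₁ - U₁ = U₂ * U₁ * U₂ - U₂)
    (b2 : U₂ * U₃ * U₂ - U₂ = U₃ * U₂ * U₃ - U₃)
    (b3 : U₃ * U₄ * U₃ - U₃ = U₄ * U₃ * U₄ - U₄)
    (s1 : (U₁ - U₃ * U₂ * U₁ + U₂) * (U₂ * U₃ * U₂ - U₂) = 0)
    (s2 : (U₂ - U₄ * U₃ * U₂ + U₃) * (U₃ * U₄ * U₃ - U₃) = 0) :
    (U₁ * U₂ * U₁ - U₁) * (U₃ * U₄ * U₃ - U₃) * (U₁ * U₂ * U₁ - U₁)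
      = δ • ((U₁ * U₂ * U₁ - U₁) * U₄) :=
  stmt1_general A δ U₁ U₂ U₃ U₄ h1 h2 h3 h4 c13 c14 c24 b1 b2 b3 s1
end

section
/- Let A be a unital ℂ-algebra, q ∈ ℂ nonzero, δ = q + q⁻¹, and let g₁, g₂, g₃ ∈ A satisfy (q⁻¹·1 − gⱼ)(q·1 + gⱼ) = 0 for j = 1,2,3, g₁g₃ = g₃g₁, and gᵢg_{i+1}gᵢ = g_{i+1}gᵢg_{i+1} for i = 1,2. For σ ∈ S₄, let g_σ be the product g_{i₁}⋯g_{i_r} along any reduced expression of σ into adjacent transpositions s_{i₁}⋯s_{i_r} (this is well defined by the braid relations). Set Uⱼ = q⁻¹·1 − gⱼ. Then the q-antisymmetrizer Σ_{σ ∈ S₄} (−q)^{ℓ(σ)} g_σ (where ℓ is the Coxeter length) equals zero if and only if (U₁ − U₃U₂U₁ + U₂)(U₂U₃U₂ − U₂) = 0. -/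
/-!
The q-antisymmetrizer of `S₄` factors through the parabolic subgroup `⟨s₂, s₃⟩ ≅ S₃`: summing over
the minimal left coset representatives `e, s₁, s₂s₁, s₃s₂s₁` gives
`A₄ = (1 - q g₁ + q² g₂g₁ - q³ g₃g₂g₁) · A₃(g₂, g₃)`. This agrees with the decomposition
`S₄ = S₃ · {e, s₃, s₃s₂, s₃s₂s₁}` used to write the sum out, because conjugation by `g₃g₂g₁`
shifts `g₂ ↦ g₁` and `g₃ ↦ g₂`.
In terms of `Uᵢ = q⁻¹ - gᵢ` the Hecke relation reads `Uᵢ² = δ Uᵢ`, so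
`A₃(g₂, g₃) = q³ (U₂U₃U₂ - U₂)` and `U₂`, `U₃` both act on it by `δ`. This collapses the coset
factor to `-q³ (U₁ - U₃U₂U₁ + U₂)`, whence `A₄ = -q⁶ (U₁ - U₃U₂U₁ + U₂)(U₂U₃U₂ - U₂)`.
-/

section QAntisymmetrizer

variable {K A : Type*} [Field K] [Ring A] [Algebra K A]

def qAntisymmetrizer₃ (q : K) (a b : A) : A :=
  1 - q • a - q • b + q ^ 2 • (a * b) + q ^ 2 • (b * a) - q ^ 3 • (a * b * a)

def qAntisymmetrizer₄ (q : K) (g₁ g₂ g₃ : A) : A :=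
  (1 : A)
    - q • g₁ - q • g₂ - q • g₃
    + q ^ 2 • (g₁ * g₂) + q ^ 2 • (g₂ * g₁) + q ^ 2 • (g₁ * g₃)
    + q ^ 2 • (g₂ * g₃) + q ^ 2 • (g₃ * g₂)
    - q ^ 3 • (g₁ * g₂ * g₁) - q ^ 3 • (g₁ * g₂ * g₃) - q ^ 3 • (g₂ * g₁ * g₃)
    - q ^ 3 • (g₁ * g₃ * g₂) - q ^ 3 • (g₂ * g₃ * g₂) - q ^ 3 • (g₃ * g₂ * g₁)
    + q ^ 4 • (g₁ * g₂ * g₁ * g₃) + q ^ 4 • (g₁ * g₂ * g₃ * g₂)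
    + q ^ 4 • (g₂ * g₁ * g₃ * g₂) + q ^ 4 • (g₁ * g₃ * g₂ * g₁)
    + q ^ 4 • (g₂ * g₃ * g₂ * g₁)
    - q ^ 5 • (g₁ * g₂ * g₁ * g₃ * g₂) - q ^ 5 • (g₁ * g₂ * g₃ * g₂ * g₁)
    - q ^ 5 • (g₂ * g₁ * g₃ * g₂ * g₁)
    + q ^ 6 • (g₁ * g₂ * g₁ * g₃ * g₂ * g₁)

theorem qAntisymmetrizer₃_eq_mul (q : K) (a b : A) :
    qAntisymmetrizer₃ q a b = (1 - q • a) * (1 - q • b + q ^ 2 • (b * a)) := by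
  simp only [qAntisymmetrizer₃, mul_add, mul_sub, sub_mul, smul_mul_assoc, mul_smul_comm,
    one_mul, mul_one, mul_assoc]
  module

section Braid

variable (q : K) {a b : A}

theorem qAntisymmetrizer₃_eq_mul_of_braid (h : a * b * a = b * a * b) :
    qAntisymmetrizer₃ q a b = (1 - q • a + q ^ 2 • (b * a)) * (1 - q • b) := by
  simp only [qAntisymmetrizer₃, h, add_mul, sub_mul, mul_sub, smul_mul_assoc, mul_smul_comm,
    one_mul, mul_one]
  module

theorem qAntisymmetrizer₃_comm_of_braid (h : a * b * a = b * a * b) :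
    qAntisymmetrizer₃ q a b = qAntisymmetrizer₃ q b a := by
  rw [qAntisymmetrizer₃, qAntisymmetrizer₃, h]
  abel

end Braid

theorem qAntisymmetrizer₄_eq_qAntisymmetrizer₃_mul (q : K) (g₁ g₂ g₃ : A) :
    qAntisymmetrizer₄ q g₁ g₂ g₃ = qAntisymmetrizer₃ q g₁ g₂ *
      (1 - q • g₃ + q ^ 2 • (g₃ * g₂) - q ^ 3 • (g₃ * g₂ * g₁)) := by
  simp only [qAntisymmetrizer₄, qAntisymmetrizer₃, mul_add, add_mul, mul_sub, sub_mul,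
    smul_mul_assoc, mul_smul_comm, one_mul, mul_one, mul_assoc]
  module

theorem semiconjBy_shift_of_braid {g₁ g₂ g₃ : A} (hcomm : g₁ * g₃ = g₃ * g₁)
    (hbraid1 : g₁ * g₂ * g₁ = g₂ * g₁ * g₂) (hbraid2 : g₂ * g₃ * g₂ = g₃ * g₂ * g₃) :
    SemiconjBy (g₃ * g₂ * g₁) g₂ g₁ ∧ SemiconjBy (g₃ * g₂ * g₁) g₃ g₂ := by
  constructor
  · calc g₃ * g₂ * g₁ * g₂ = g₃ * (g₁ * g₂ * g₁) := by rw [hbraid1]; simp only [mul_assoc]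
      _ = g₁ * (g₃ * g₂ * g₁) := by rw [← mul_assoc, ← mul_assoc, ← hcomm]; simp only [mul_assoc]
  · calc g₃ * g₂ * g₁ * g₃ = g₃ * g₂ * g₃ * g₁ := by rw [mul_assoc _ g₁, hcomm, ← mul_assoc]
      _ = g₂ * (g₃ * g₂ * g₁) := by rw [← hbraid2]; simp only [mul_assoc]

theorem qAntisymmetrizer₄_eq_mul {q : K} {g₁ g₂ g₃ : A} (hcomm : g₁ * g₃ = g₃ * g₁)
    (hbraid1 : g₁ * g₂ * g₁ = g₂ * g₁ * g₂) (hbraid2 : g₂ * g₃ * g₂ = g₃ * g₂ * g₃) :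
    qAntisymmetrizer₄ q g₁ g₂ g₃ =
      (1 - q • g₁ + q ^ 2 • (g₂ * g₁) - q ^ 3 • (g₃ * g₂ * g₁)) * qAntisymmetrizer₃ q g₂ g₃ := by
  set w := g₃ * g₂ * g₁
  obtain ⟨h₂, h₃⟩ := semiconjBy_shift_of_braid hcomm hbraid1 hbraid2
  have hshift : SemiconjBy w ((1 - q • g₂ + q ^ 2 • (g₃ * g₂)) * (1 - q • g₃))
      ((1 - q • g₁ + q ^ 2 • (g₂ * g₁)) * (1 - q • g₂)) :=
    (((SemiconjBy.one_right w).sub_right (h₂.smul_right q)).add_right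
        ((h₃.mul_right h₂).smul_right _)).mul_right
      ((SemiconjBy.one_right w).sub_right (h₃.smul_right q))
  calc qAntisymmetrizer₄ q g₁ g₂ g₃
      = (1 - q • g₁ + q ^ 2 • (g₂ * g₁)) * (1 - q • g₂) *
          (1 - q • g₃ + q ^ 2 • (g₃ * g₂) - q ^ 3 • w) := by
        rw [qAntisymmetrizer₄_eq_qAntisymmetrizer₃_mul, qAntisymmetrizer₃_eq_mul_of_braid q hbraid1]
    _ = (1 - q • g₁ + q ^ 2 • (g₂ * g₁)) * ((1 - q • g₂) * (1 - q • g₃ + q ^ 2 • (g₃ * g₂)))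
          - q ^ 3 • (w * ((1 - q • g₂ + q ^ 2 • (g₃ * g₂)) * (1 - q • g₃))) := by
        rw [hshift.eq, mul_sub, mul_smul_comm, mul_assoc]
    _ = _ := by
        rw [← qAntisymmetrizer₃_eq_mul, ← qAntisymmetrizer₃_eq_mul_of_braid q hbraid2, sub_mul,
          smul_mul_assoc]

section Hecke

variable {q : K} {g U : A}

theorem mul_self_eq_smul_of_hecke (hU : U = q⁻¹ • 1 - g)
    (hquad : (q⁻¹ • (1 : A) - g) * (q • 1 + g) = 0) : U * U = (q + q⁻¹) • U := by
  have hfactor : q • 1 + g = (q + q⁻¹) • 1 - U := by rw [hU]; module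
  rwa [← hU, hfactor, mul_sub, mul_smul_comm, mul_one, sub_eq_zero, eq_comm] at hquad

theorem one_sub_smul_eq_smul_of_ne_zero (hq : q ≠ 0) (hU : U = q⁻¹ • 1 - g) :
    1 - q • g = q • U := by
  rw [hU, smul_sub, smul_smul, mul_inv_cancel₀ hq, one_smul]

theorem mul_qAntisymmetrizer₃_of_hecke (hq : q ≠ 0) (hU : U = q⁻¹ • 1 - g)
    (hquad : (q⁻¹ • (1 : A) - g) * (q • 1 + g) = 0) (b : A) :
    U * qAntisymmetrizer₃ q g b = (q + q⁻¹) • qAntisymmetrizer₃ q g b := by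
  rw [qAntisymmetrizer₃_eq_mul, one_sub_smul_eq_smul_of_ne_zero hq hU, ← mul_assoc, mul_smul_comm,
    mul_self_eq_smul_of_hecke hU hquad, smul_comm, smul_mul_assoc, smul_mul_assoc]

theorem qAntisymmetrizer₃_eq_smul_of_hecke (hq : q ≠ 0) {a b Ua Ub : A}
    (hUa : Ua = q⁻¹ • 1 - a) (hUb : Ub = q⁻¹ • 1 - b)
    (hquad : (q⁻¹ • (1 : A) - a) * (q • 1 + a) = 0) :
    qAntisymmetrizer₃ q a b = q ^ 3 • (Ua * Ub * Ua - Ua) := by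
  have hsq := mul_self_eq_smul_of_hecke hUa hquad
  obtain rfl : a = q⁻¹ • 1 - Ua := by rw [hUa, sub_sub_cancel]
  obtain rfl : b = q⁻¹ • 1 - Ub := by rw [hUb, sub_sub_cancel]
  simp only [qAntisymmetrizer₃_eq_mul, mul_add, mul_sub, sub_mul, smul_mul_assoc, mul_smul_comm,
    smul_sub, smul_smul, one_mul, mul_one, mul_assoc, hsq]
  match_scalars <;> field_simp <;> ring

theorem cosetSum_mul_eq_of_absorbs (hq : q ≠ 0) {g₁ g₂ g₃ U₁ U₂ U₃ X : A}
    (hU1 : U₁ = q⁻¹ • 1 - g₁) (hU2 : U₂ = q⁻¹ • 1 - g₂) (hU3 : U₃ = q⁻¹ • 1 - g₃)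
    (hcomm : g₁ * g₃ = g₃ * g₁)
    (h₂ : U₂ * X = (q + q⁻¹) • X) (h₃ : U₃ * X = (q + q⁻¹) • X) :
    (1 - q • g₁ + q ^ 2 • (g₂ * g₁) - q ^ 3 • (g₃ * g₂ * g₁)) * X =
      -q ^ 3 • ((U₁ - U₃ * U₂ * U₁ + U₂) * X) := by
  have hU13 : U₁ * U₃ = U₃ * U₁ := by
    simp only [hU1, hU3, mul_sub, sub_mul, smul_mul_assoc, mul_smul_comm, one_mul, mul_one, hcomm]
    module
  have h₃₁ : U₃ * (U₁ * X) = (q + q⁻¹) • (U₁ * X) := by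
    rw [← mul_assoc, ← hU13, mul_assoc, h₃, mul_smul_comm]
  obtain rfl : g₁ = q⁻¹ • 1 - U₁ := by rw [hU1, sub_sub_cancel]
  obtain rfl : g₂ = q⁻¹ • 1 - U₂ := by rw [hU2, sub_sub_cancel]
  obtain rfl : g₃ = q⁻¹ • 1 - U₃ := by rw [hU3, sub_sub_cancel]
  simp only [mul_add, mul_sub, add_mul, sub_mul, smul_mul_assoc, mul_smul_comm, smul_sub,
    smul_add, smul_smul, one_mul, mul_one, mul_assoc, h₂, h₃, h₃₁]
  match_scalars <;> field_simp <;> ring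

end Hecke

end QAntisymmetrizer

theorem stmt4_general (A : Type*) [Ring A] [Algebra ℂ A] (q : ℂ) (hq : q ≠ 0)
    (g₁ g₂ g₃ : A)
    (hquad2 : (q⁻¹ • (1 : A) - g₂) * (q • (1 : A) + g₂) = 0)
    (hquad3 : (q⁻¹ • (1 : A) - g₃) * (q • (1 : A) + g₃) = 0)
    (hcomm : g₁ * g₃ = g₃ * g₁)
    (hbraid1 : g₁ * g₂ * g₁ = g₂ * g₁ * g₂)
    (hbraid2 : g₂ * g₃ * g₂ = g₃ * g₂ * g₃)
    (U₁ U₂ U₃ : A)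
    (hU1 : U₁ = q⁻¹ • (1 : A) - g₁) (hU2 : U₂ = q⁻¹ • (1 : A) - g₂)
    (hU3 : U₃ = q⁻¹ • (1 : A) - g₃) :
    ((1 : A)
      - q • g₁ - q • g₂ - q • g₃
      + q ^ 2 • (g₁ * g₂) + q ^ 2 • (g₂ * g₁) + q ^ 2 • (g₁ * g₃)
      + q ^ 2 • (g₂ * g₃) + q ^ 2 • (g₃ * g₂)
      - q ^ 3 • (g₁ * g₂ * g₁) - q ^ 3 • (g₁ * g₂ * g₃) - q ^ 3 • (g₂ * g₁ * g₃)
      - q ^ 3 • (g₁ * g₃ * g₂) - q ^ 3 • (g₂ * g₃ * g₂) - q ^ 3 • (g₃ * g₂ * g₁)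
      + q ^ 4 • (g₁ * g₂ * g₁ * g₃) + q ^ 4 • (g₁ * g₂ * g₃ * g₂)
      + q ^ 4 • (g₂ * g₁ * g₃ * g₂) + q ^ 4 • (g₁ * g₃ * g₂ * g₁)
      + q ^ 4 • (g₂ * g₃ * g₂ * g₁)
      - q ^ 5 • (g₁ * g₂ * g₁ * g₃ * g₂) - q ^ 5 • (g₁ * g₂ * g₃ * g₂ * g₁)
      - q ^ 5 • (g₂ * g₁ * g₃ * g₂ * g₁)
      + q ^ 6 • (g₁ * g₂ * g₁ * g₃ * g₂ * g₁) = 0)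
    ↔ (U₁ - U₃ * U₂ * U₁ + U₂) * (U₂ * U₃ * U₂ - U₂) = 0 := by
  have h₂ : U₂ * qAntisymmetrizer₃ q g₂ g₃ = (q + q⁻¹) • qAntisymmetrizer₃ q g₂ g₃ :=
    mul_qAntisymmetrizer₃_of_hecke hq hU2 hquad2 g₃
  have h₃ : U₃ * qAntisymmetrizer₃ q g₂ g₃ = (q + q⁻¹) • qAntisymmetrizer₃ q g₂ g₃ := by
    rw [qAntisymmetrizer₃_comm_of_braid q hbraid2]
    exact mul_qAntisymmetrizer₃_of_hecke hq hU3 hquad3 g₂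
  change qAntisymmetrizer₄ q g₁ g₂ g₃ = 0 ↔ _
  rw [qAntisymmetrizer₄_eq_mul hcomm hbraid1 hbraid2,
    cosetSum_mul_eq_of_absorbs hq hU1 hU2 hU3 hcomm h₂ h₃,
    qAntisymmetrizer₃_eq_smul_of_hecke hq hU2 hU3 hquad2, mul_smul_comm, smul_smul, smul_eq_zero]
  simp [hq]

/-- Let `A` be a unital ℂ-algebra, `q ∈ ℂ` nonzero, `δ = q + q⁻¹`, and let
`g₁, g₂, g₃ ∈ A` satisfy the Hecke quadratic relation, far commutation `g₁g₃ = g₃g₁`,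
and the braid relations.  For `σ ∈ S₄`, `g_σ` is the product of the `gᵢ` along any
reduced expression of `σ` (well defined by the braid relations); below the
q-antisymmetrizer `Σ_{σ ∈ S₄} (−q)^{ℓ(σ)} g_σ` is written out as the explicit sum of
its 24 terms, one reduced expression per permutation (obtained from the coset
decomposition `S₄ = S₃·{e, s₃, s₃s₂, s₃s₂s₁}`).  Setting `Uⱼ = q⁻¹·1 − gⱼ`, the
q-antisymmetrizer vanishes iff `(U₁ − U₃U₂U₁ + U₂)(U₂U₃U₂ − U₂) = 0`. -/
theorem stmt4 (A : Type*) [Ring A] [Algebra ℂ A] (q : ℂ) (hq : q ≠ 0)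
    (δ : ℂ) (hδ : δ = q + q⁻¹)
    (g₁ g₂ g₃ : A)
    (hquad1 : (q⁻¹ • (1 : A) - g₁) * (q • (1 : A) + g₁) = 0)
    (hquad2 : (q⁻¹ • (1 : A) - g₂) * (q • (1 : A) + g₂) = 0)
    (hquad3 : (q⁻¹ • (1 : A) - g₃) * (q • (1 : A) + g₃) = 0)
    (hcomm : g₁ * g₃ = g₃ * g₁)
    (hbraid1 : g₁ * g₂ * g₁ = g₂ * g₁ * g₂)
    (hbraid2 : g₂ * g₃ * g₂ = g₃ * g₂ * g₃)
    (U₁ U₂ U₃ : A)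
    (hU1 : U₁ = q⁻¹ • (1 : A) - g₁) (hU2 : U₂ = q⁻¹ • (1 : A) - g₂)
    (hU3 : U₃ = q⁻¹ • (1 : A) - g₃) :
    ((1 : A)
      - q • g₁ - q • g₂ - q • g₃
      + q ^ 2 • (g₁ * g₂) + q ^ 2 • (g₂ * g₁) + q ^ 2 • (g₁ * g₃)
      + q ^ 2 • (g₂ * g₃) + q ^ 2 • (g₃ * g₂)
      - q ^ 3 • (g₁ * g₂ * g₁) - q ^ 3 • (g₁ * g₂ * g₃) - q ^ 3 • (g₂ * g₁ * g₃)
      - q ^ 3 • (g₁ * g₃ * g₂) - q ^ 3 • (g₂ * g₃ * g₂) - q ^ 3 • (g₃ * g₂ * g₁)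
      + q ^ 4 • (g₁ * g₂ * g₁ * g₃) + q ^ 4 • (g₁ * g₂ * g₃ * g₂)
      + q ^ 4 • (g₂ * g₁ * g₃ * g₂) + q ^ 4 • (g₁ * g₃ * g₂ * g₁)
      + q ^ 4 • (g₂ * g₃ * g₂ * g₁)
      - q ^ 5 • (g₁ * g₂ * g₁ * g₃ * g₂) - q ^ 5 • (g₁ * g₂ * g₃ * g₂ * g₁)
      - q ^ 5 • (g₂ * g₁ * g₃ * g₂ * g₁)
      + q ^ 6 • (g₁ * g₂ * g₁ * g₃ * g₂ * g₁) = 0)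
    ↔ (U₁ - U₃ * U₂ * U₁ + U₂) * (U₂ * U₃ * U₂ - U₂) = 0 :=
  stmt4_general A q hq g₁ g₂ g₃ hquad2 hquad3 hcomm hbraid1 hbraid2 U₁ U₂ U₃ hU1 hU2 hU3
end

section
/- Let A be a unital ℂ-algebra and tr : A → ℂ a linear functional with tr(xy) = tr(yx) for all x, y ∈ A. Let M ⊆ A be a subalgebra. Let q ∈ ℂ be nonzero, δ = q + q⁻¹, τ = q² + 1 + q⁻², and assume τ ≠ 0. Let u, v ∈ A satisfy u² = δu, and suppose the Markov properties hold: tr(xu) = (δ/τ)·tr(x) for all x ∈ M, and tr(yv) = (δ/τ)·tr(y) for all y in the subalgebra of A generated by M ∪ {u}. Then tr((uvu − u)x) = (δ/τ²)·tr(x) for every x ∈ M. -/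
/-!
Cyclicity of the trace and `u² = δu` give `tr(u x u) = δ · tr(x u) = δ²/τ · tr x`, and a cyclic
permutation turns `tr(u v u x)` into `tr((u x u) v) = δ/τ · tr(u x u)` because `u x u` lies in the
algebra generated by `M ∪ {u}`. Subtracting `tr(u x) = δ/τ · tr x` leaves `δ(δ² - τ)/τ² · tr x`,
and `δ² = τ + 1` is the quantum-integer identity `[2]² = [3] + 1`.
-/

theorem add_inv_sq_eq_sq_add_one_add_inv_sq_add_one {K : Type*} [Field K] {q : K} (hq : q ≠ 0) :
    (q + q⁻¹) ^ 2 = q ^ 2 + 1 + (q ^ 2)⁻¹ + 1 := by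
  field_simp
  ring

section Trace

variable {R A : Type*} [CommSemiring R] [Semiring A] [Algebra R A]
  (tr : A →ₗ[R] R) (htr : ∀ x y : A, tr (x * y) = tr (y * x))

include htr

theorem trace_mul_mul_self_of_mul_self_eq_smul {δ : R} {u : A} (hu : u * u = δ • u) (x : A) :
    tr (u * x * u) = δ * tr (x * u) := by
  rw [mul_assoc, htr, mul_assoc, hu, mul_smul_comm, map_smul, smul_eq_mul]

theorem trace_mul_mul_mul_eq_trace_mul_mul_mul (u v x : A) :
    tr (u * v * u * x) = tr (u * x * u * v) := by
  rw [mul_assoc _ u x, htr, ← mul_assoc]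

end Trace

/-- Let `A` be a unital ℂ-algebra and `tr : A → ℂ` a linear functional with
`tr(xy) = tr(yx)`.  Let `M ⊆ A` be a subalgebra.  Let `q ∈ ℂ` be nonzero,
`δ = q + q⁻¹`, `τ = q² + 1 + q⁻²` with `τ ≠ 0`.  Let `u, v ∈ A` with `u² = δu`, and
suppose the Markov properties hold: `tr(xu) = (δ/τ)·tr(x)` for `x ∈ M`, and
`tr(yv) = (δ/τ)·tr(y)` for `y` in the subalgebra generated by `M ∪ {u}`.
Then `tr((uvu − u)x) = (δ/τ²)·tr(x)` for every `x ∈ M`. -/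
theorem stmt5 (A : Type*) [Ring A] [Algebra ℂ A]
    (tr : A →ₗ[ℂ] ℂ) (htr : ∀ x y : A, tr (x * y) = tr (y * x))
    (M : Subalgebra ℂ A) (q : ℂ) (hq : q ≠ 0)
    (δ τ : ℂ) (hδ : δ = q + q⁻¹) (hτ : τ = q ^ 2 + 1 + (q ^ 2)⁻¹) (hτ0 : τ ≠ 0)
    (u v : A) (hu : u * u = δ • u)
    (hMarkov_u : ∀ x ∈ M, tr (x * u) = (δ / τ) * tr x)
    (hMarkov_v : ∀ y ∈ Algebra.adjoin ℂ ((M : Set A) ∪ {u}),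
      tr (y * v) = (δ / τ) * tr y) :
    ∀ x ∈ M, tr ((u * v * u - u) * x) = (δ / τ ^ 2) * tr x := by
  intro x hx
  have hδτ : δ ^ 2 = τ + 1 := by
    rw [hδ, hτ]
    exact add_inv_sq_eq_sq_add_one_add_inv_sq_add_one hq
  have hu_mem : u ∈ Algebra.adjoin ℂ ((M : Set A) ∪ {u}) := Algebra.subset_adjoin (Or.inr rfl)
  have hx_mem : x ∈ Algebra.adjoin ℂ ((M : Set A) ∪ {u}) := Algebra.subset_adjoin (Or.inl hx)
  have huxu : tr (u * x * u) = δ * ((δ / τ) * tr x) := by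
    rw [trace_mul_mul_self_of_mul_self_eq_smul tr htr hu, hMarkov_u x hx]
  have huvux : tr (u * v * u * x) = (δ / τ) * (δ * ((δ / τ) * tr x)) := by
    rw [trace_mul_mul_mul_eq_trace_mul_mul_mul tr htr,
      hMarkov_v _ (mul_mem (mul_mem hu_mem hx_mem) hu_mem), huxu]
  have hux : tr (u * x) = (δ / τ) * tr x := by rw [htr, hMarkov_u x hx]
  rw [sub_mul, map_sub, huvux, hux]
  field_simp
  linear_combination tr x * δ * hδτ
end

section
/- Let k ≥ 1 be a natural number not divisible by 3. Let T_k = {(a,b) ∈ ℕ² : a + b ≤ k} and let A : T_k → T_k be the map A(a,b) = (k − a − b, a). For (a,b) ∈ T_k let e(a,b) ∈ {0,1,2} be the residue of the integer k(a − b) modulo 3. Then the number of pairs (a,b) ∈ T_k such that A^{e(a,b)}(a,b) = (b,a) equals 3·⌊(k+2)/2⌋. -/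
/-!
A point `(a, b)` of the triangle satisfies `A^e (a, b) = (b, a)` for `e = 0, 1, 2` exactly when it lies
on the diagonal `a = b`, the line `a + 2b = k`, or the line `2a + b = k`, respectively. Since `3 ∤ k`,
on the first line `k(a - b) ≡ 0`, on the second `k(a - b) ≡ k² ≡ 1`, and on the third
`k(a - b) ≡ -k² ≡ 2 (mod 3)`, so the prescribed exponent always picks out the matching line, and these
three segments are pairwise disjoint. Each contains `⌊k/2⌋ + 1` lattice points, and
`3(⌊k/2⌋ + 1) = 3⌊(k+2)/2⌋`.
-/

namespace TriangleRotation

open Finset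

def rot (k : ℕ) (p : ℕ × ℕ) : ℕ × ℕ := (k - p.1 - p.2, p.1)

def twist (k : ℕ) (p : ℕ × ℕ) : ℕ := (((k : ℤ) * ((p.1 : ℤ) - (p.2 : ℤ))) % 3).toNat

theorem twist_lt_three (k : ℕ) (p : ℕ × ℕ) : twist k p < 3 := by
  unfold twist; omega

theorem twist_mk_self {k a : ℕ} : twist k (a, a) = 0 := by
  simp [twist]

theorem twist_of_add_two_mul_eq {k a b : ℕ} (h3 : ¬ 3 ∣ k) (h : a + 2 * b = k) :
    twist k (a, b) = 1 := by
  have hk : (k : ℤ) % 3 = 1 ∨ (k : ℤ) % 3 = 2 := by omega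
  have hab : (a : ℤ) - b = k - 3 * b := by omega
  unfold twist
  rw [hab, Int.mul_emod]
  rcases hk with hk | hk <;> rw [hk] <;> omega

theorem twist_of_two_mul_add_eq {k a b : ℕ} (h3 : ¬ 3 ∣ k) (h : 2 * a + b = k) :
    twist k (a, b) = 2 := by
  have hk : (k : ℤ) % 3 = 1 ∨ (k : ℤ) % 3 = 2 := by omega
  have hab : (a : ℤ) - b = 3 * a - k := by omega
  unfold twist
  rw [hab, Int.mul_emod]
  rcases hk with hk | hk <;> rw [hk] <;> omega

theorem rot_iterate_eq_swap_iff {k a b : ℕ} (h3 : ¬ 3 ∣ k) (hab : a + b ≤ k) :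
    (rot k)^[twist k (a, b)] (a, b) = (b, a) ↔ a = b ∨ a + 2 * b = k ∨ 2 * a + b = k := by
  constructor
  · intro h
    have he := twist_lt_three k (a, b)
    interval_cases twist k (a, b) <;>
      simp only [Function.iterate_succ, Function.iterate_zero, Function.comp_apply, id_eq, rot,
        Prod.ext_iff] at h <;> omega
  · rintro (rfl | h | h)
    · rw [twist_mk_self, Function.iterate_zero_apply]
    · rw [twist_of_add_two_mul_eq h3 h, Function.iterate_one, rot, Prod.mk.injEq]
      omega
    · rw [twist_of_two_mul_add_eq h3 h, Function.iterate_succ_apply, Function.iterate_one, rot,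
        rot, Prod.mk.injEq]
      omega

def diagSeg (k : ℕ) : Finset (ℕ × ℕ) := (range (k / 2 + 1)).image fun a => (a, a)

def segAddTwoMul (k : ℕ) : Finset (ℕ × ℕ) := (range (k / 2 + 1)).image fun b => (k - 2 * b, b)

def segTwoMulAdd (k : ℕ) : Finset (ℕ × ℕ) := (range (k / 2 + 1)).image fun a => (a, k - 2 * a)

theorem mem_diagSeg {k : ℕ} {p : ℕ × ℕ} : p ∈ diagSeg k ↔ p.1 + p.2 ≤ k ∧ p.1 = p.2 := by
  obtain ⟨a, b⟩ := p
  simp only [diagSeg, mem_image, mem_range, Prod.mk.injEq]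
  constructor
  · rintro ⟨x, hx, rfl, rfl⟩; omega
  · rintro ⟨h, rfl⟩; exact ⟨a, by omega, rfl, rfl⟩

theorem mem_segAddTwoMul {k : ℕ} {p : ℕ × ℕ} :
    p ∈ segAddTwoMul k ↔ p.1 + p.2 ≤ k ∧ p.1 + 2 * p.2 = k := by
  obtain ⟨a, b⟩ := p
  simp only [segAddTwoMul, mem_image, mem_range, Prod.mk.injEq]
  constructor
  · rintro ⟨x, hx, rfl, rfl⟩; omega
  · rintro ⟨h, h'⟩; exact ⟨b, by omega, by omega, rfl⟩

theorem mem_segTwoMulAdd {k : ℕ} {p : ℕ × ℕ} :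
    p ∈ segTwoMulAdd k ↔ p.1 + p.2 ≤ k ∧ 2 * p.1 + p.2 = k := by
  obtain ⟨a, b⟩ := p
  simp only [segTwoMulAdd, mem_image, mem_range, Prod.mk.injEq]
  constructor
  · rintro ⟨x, hx, rfl, rfl⟩; omega
  · rintro ⟨h, h'⟩; exact ⟨a, by omega, rfl, by omega⟩

theorem card_diagSeg (k : ℕ) : #(diagSeg k) = k / 2 + 1 := by
  rw [diagSeg, card_image_of_injective _ fun x y h => congrArg Prod.fst h, card_range]

theorem card_segAddTwoMul (k : ℕ) : #(segAddTwoMul k) = k / 2 + 1 := by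
  rw [segAddTwoMul, card_image_of_injective _ fun x y h => congrArg Prod.snd h, card_range]

theorem card_segTwoMulAdd (k : ℕ) : #(segTwoMulAdd k) = k / 2 + 1 := by
  rw [segTwoMulAdd, card_image_of_injective _ fun x y h => congrArg Prod.fst h, card_range]

theorem card_diagSeg_union_union (k : ℕ) (h3 : ¬ 3 ∣ k) :
    #(diagSeg k ∪ segAddTwoMul k ∪ segTwoMulAdd k) = 3 * (k / 2 + 1) := by
  have h12 : Disjoint (diagSeg k) (segAddTwoMul k) := disjoint_left.2 fun p h h' => by
    rw [mem_diagSeg] at h; rw [mem_segAddTwoMul] at h'; omega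
  have h13 : Disjoint (diagSeg k) (segTwoMulAdd k) := disjoint_left.2 fun p h h' => by
    rw [mem_diagSeg] at h; rw [mem_segTwoMulAdd] at h'; omega
  have h23 : Disjoint (segAddTwoMul k) (segTwoMulAdd k) := disjoint_left.2 fun p h h' => by
    rw [mem_segAddTwoMul] at h; rw [mem_segTwoMulAdd] at h'; omega
  rw [card_union_of_disjoint (disjoint_union_left.2 ⟨h13, h23⟩), card_union_of_disjoint h12,
    card_diagSeg, card_segAddTwoMul, card_segTwoMulAdd]
  ring

theorem filter_rot_iterate_eq_swap {k : ℕ} (h3 : ¬ 3 ∣ k) :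
    (range (k + 1) ×ˢ range (k + 1)).filter
        (fun p => p.1 + p.2 ≤ k ∧ (rot k)^[twist k p] p = p.swap)
      = diagSeg k ∪ segAddTwoMul k ∪ segTwoMulAdd k := by
  ext ⟨a, b⟩
  simp only [mem_filter, mem_product, mem_range, mem_union, mem_diagSeg, mem_segAddTwoMul,
    mem_segTwoMulAdd, Prod.swap_prod_mk]
  constructor
  · rintro ⟨-, hab, h⟩
    have := (rot_iterate_eq_swap_iff h3 hab).1 h
    omega
  · intro h
    have hab : a + b ≤ k := by tauto
    exact ⟨by omega, hab, (rot_iterate_eq_swap_iff h3 hab).2 (by tauto)⟩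

end TriangleRotation

open Finset TriangleRotation

theorem stmt7_general (k : ℕ) (h3 : ¬ (3 ∣ k)) :
    ((Finset.range (k + 1) ×ˢ Finset.range (k + 1)).filter
        (fun p => p.1 + p.2 ≤ k ∧
          (fun p : ℕ × ℕ => (k - p.1 - p.2, p.1))^[
              (((k : ℤ) * ((p.1 : ℤ) - (p.2 : ℤ))) % 3).toNat] p
            = (p.2, p.1))).card
      = 3 * ((k + 2) / 2) := by
  calc _ = #(diagSeg k ∪ segAddTwoMul k ∪ segTwoMulAdd k) :=
        congrArg Finset.card (filter_rot_iterate_eq_swap h3)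
    _ = 3 * (k / 2 + 1) := card_diagSeg_union_union k h3
    _ = 3 * ((k + 2) / 2) := by omega

/-- Let `k ≥ 1` be a natural number not divisible by 3.  Let
`T_k = {(a,b) ∈ ℕ² : a + b ≤ k}` and let `A(a,b) = (k − a − b, a)`.  For
`(a,b) ∈ T_k` let `e(a,b) ∈ {0,1,2}` be the residue of the integer `k(a − b)` mod 3.
Then the number of pairs `(a,b) ∈ T_k` with `A^{e(a,b)}(a,b) = (b,a)` equals
`3·⌊(k+2)/2⌋`. -/
theorem stmt7 (k : ℕ) (hk : 1 ≤ k) (h3 : ¬ (3 ∣ k)) :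
    ((Finset.range (k + 1) ×ˢ Finset.range (k + 1)).filter
        (fun p => p.1 + p.2 ≤ k ∧
          (fun p : ℕ × ℕ => (k - p.1 - p.2, p.1))^[
              (((k : ℤ) * ((p.1 : ℤ) - (p.2 : ℤ))) % 3).toNat] p
            = (p.2, p.1))).card
      = 3 * ((k + 2) / 2) :=
  stmt7_general k h3
end

section
/- Let k ≥ 0 be a natural number divisible by 3. Let T_k = {(a,b) ∈ ℕ² : a + b ≤ k} and let A : T_k → T_k be the map A(a,b) = (k − a − b, a). Then the sum, over all pairs (a,b) ∈ T_k with a ≡ b (mod 3), of the number of exponents j ∈ {0,1,2} with A^j(a,b) = (b,a), equals 3·⌊(k+2)/2⌋. -/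
/-!
Exchanging the two sums, the left side counts, for each `j ∈ {0, 1, 2}`, the points `p` with
`A^j p = conj p`. Inside `T_k` these are the lines `a = b`, `a + 2b = k` and `2a + b = k`, each
meeting `T_k` in `⌊k/2⌋ + 1` points; since `3 ∣ k`, all of them satisfy `a ≡ b (mod 3)`.
-/

open Finset Function

/-- The automorphism `A` of `T_k`; outside `T_k` the truncated subtraction makes it meaningless. -/
def rot (k : ℕ) (p : ℕ × ℕ) : ℕ × ℕ := (k - p.1 - p.2, p.1)

def triangleModThree (k : ℕ) : Finset (ℕ × ℕ) :=
  (range (k + 1) ×ˢ range (k + 1)).filter (fun p => p.1 + p.2 ≤ k ∧ p.1 % 3 = p.2 % 3)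

section

variable {k : ℕ} {p : ℕ × ℕ}

lemma mem_triangleModThree : p ∈ triangleModThree k ↔ p.1 + p.2 ≤ k ∧ p.1 % 3 = p.2 % 3 := by
  simp only [triangleModThree, mem_filter, mem_product, mem_range]
  omega

lemma rot_iterate_one_eq_swap_iff (hp : p.1 + p.2 ≤ k) :
    (rot k)^[1] p = p.swap ↔ p.1 + 2 * p.2 = k := by
  simp only [iterate_one, rot, Prod.ext_iff, Prod.fst_swap, Prod.snd_swap, and_true]
  omega

lemma rot_iterate_two_eq_swap_iff (hp : p.1 + p.2 ≤ k) :
    (rot k)^[2] p = p.swap ↔ 2 * p.1 + p.2 = k := by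
  simp only [iterate_succ, iterate_zero, comp_apply, id_eq, rot, Prod.ext_iff, Prod.fst_swap,
    Prod.snd_swap]
  omega

end

lemma card_filter_rot_iterate_eq_swap {k j : ℕ} (h3 : 3 ∣ k) (hj : j < 3) :
    #((triangleModThree k).filter fun p => (rot k)^[j] p = p.swap) = k / 2 + 1 := by
  rw [← card_range (k / 2 + 1)]
  interval_cases j
  · refine card_nbij' Prod.fst (fun t => (t, t)) ?_ ?_ ?_ ?_ <;> intro p <;>
      simp [mem_triangleModThree, Prod.ext_iff] <;> omega
  · rw [filter_congr fun p hp => rot_iterate_one_eq_swap_iff (mem_triangleModThree.1 hp).1]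
    refine card_nbij' Prod.snd (fun t => (k - 2 * t, t)) ?_ ?_ ?_ ?_ <;> intro p <;>
      simp [mem_triangleModThree, Prod.ext_iff] <;> omega
  · rw [filter_congr fun p hp => rot_iterate_two_eq_swap_iff (mem_triangleModThree.1 hp).1]
    refine card_nbij' Prod.fst (fun t => (t, k - 2 * t)) ?_ ?_ ?_ ?_ <;> intro p <;>
      simp [mem_triangleModThree, Prod.ext_iff] <;> omega

/-- Let `k ≥ 0` be divisible by 3.  Let `T_k = {(a,b) ∈ ℕ² : a + b ≤ k}` and
`A(a,b) = (k − a − b, a)`.  Then the sum, over all `(a,b) ∈ T_k` with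
`a ≡ b (mod 3)`, of the number of exponents `j ∈ {0,1,2}` with `A^j(a,b) = (b,a)`,
equals `3·⌊(k+2)/2⌋`. -/
theorem stmt8 (k : ℕ) (h3 : 3 ∣ k) :
    (∑ p ∈ (Finset.range (k + 1) ×ˢ Finset.range (k + 1)).filter
        (fun p => p.1 + p.2 ≤ k ∧ p.1 % 3 = p.2 % 3),
      ((Finset.range 3).filter
        (fun j => (fun p : ℕ × ℕ => (k - p.1 - p.2, p.1))^[j] p = (p.2, p.1))).card)
      = 3 * ((k + 2) / 2) := by
  calc _ = ∑ j ∈ range 3, #((triangleModThree k).filter fun p => (rot k)^[j] p = p.swap) :=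
        sum_card_bipartiteAbove_eq_sum_card_bipartiteBelow _
    _ = ∑ _j ∈ range 3, (k / 2 + 1) :=
        sum_congr rfl fun j hj => card_filter_rot_iterate_eq_swap h3 (mem_range.1 hj)
    _ = 3 * ((k + 2) / 2) := by
        rw [sum_const, card_range, smul_eq_mul]
        omega
end

section
/- For every natural number k ≥ 3 with k ≠ 7 and k ≠ 8, the four rational numbers T_A(k) = (k+1)(k+2)/2, T_D(k) = (k+1)(k+2)/6 + c_k (where c_k = 2/3 if 3 divides k and c_k = 0 otherwise), T_{A*}(k) = ⌊(k+2)/2⌋ and T_{D*}(k) = 3⌊(k+2)/2⌋ are pairwise distinct. Moreover, for k = 7 and k = 8 one has T_D(k) = T_{D*}(k), while all the other pairs among the four numbers are distinct. -/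
/-- Trace of the `𝒜^{(k+3)}` modular invariant. -/
def TA (k : ℕ) : ℚ := (k + 1) * (k + 2) / 2

/-- Trace of the `𝒟^{(k+3)}` modular invariant. -/
def TD (k : ℕ) : ℚ := (k + 1) * (k + 2) / 6 + (if 3 ∣ k then 2 / 3 else 0)

/-- Trace of the `𝒜^{(k+3)∗}` modular invariant, `⌊(k+2)/2⌋`. -/
def TAstar (k : ℕ) : ℚ := ((k + 2) / 2 : ℕ)

/-- Trace of the `𝒟^{(k+3)∗}` modular invariant, `3⌊(k+2)/2⌋`. -/
def TDstar (k : ℕ) : ℚ := 3 * ((k + 2) / 2 : ℕ)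

/-! Every pair except `(T_D, T_{D*})` is separated by a uniform ordering
`T_{A*} < T_D < T_A` and `T_{A*} < T_{D*} < T_A`, obtained from `(k+1)/2 ≤ ⌊(k+2)/2⌋ ≤ (k+2)/2`
and `0 ≤ c_k ≤ 2/3`. For `T_D` against `T_{D*} ≈ 3(k+2)/2` the quadratic term of `T_D` wins
once `k ≥ 9`, and the remaining levels are checked by hand. -/

lemma TDstar_eq_three_mul_TAstar (k : ℕ) : TDstar k = 3 * TAstar k := rfl

lemma TAstar_le (k : ℕ) : TAstar k ≤ (k + 2) / 2 := by
  have h : ((2 * ((k + 2) / 2) : ℕ) : ℚ) ≤ k + 2 := by exact_mod_cast Nat.mul_div_le (k + 2) 2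
  unfold TAstar
  push_cast at h
  linarith

lemma le_TAstar (k : ℕ) : ((k : ℚ) + 1) / 2 ≤ TAstar k := by
  have h : ((k + 1 : ℕ) : ℚ) ≤ ((2 * ((k + 2) / 2) : ℕ) : ℚ) := by exact_mod_cast (by omega)
  unfold TAstar
  push_cast at h
  linarith

lemma le_TD (k : ℕ) : ((k : ℚ) + 1) * (k + 2) / 6 ≤ TD k := by
  unfold TD
  split_ifs <;> norm_num

lemma TD_le (k : ℕ) : TD k ≤ ((k : ℚ) + 1) * (k + 2) / 6 + 2 / 3 := by
  unfold TD
  split_ifs <;> norm_num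

lemma TAstar_lt_TDstar (k : ℕ) : TAstar k < TDstar k := by
  have := le_TAstar k
  rw [TDstar_eq_three_mul_TAstar]
  linarith [(Nat.cast_nonneg k : (0 : ℚ) ≤ k)]

lemma TDstar_lt_TA {k : ℕ} (hk : 3 ≤ k) : TDstar k < TA k := by
  have hk' : (3 : ℚ) ≤ k := by exact_mod_cast hk
  have := TAstar_le k
  rw [TDstar_eq_three_mul_TAstar, TA]
  nlinarith

lemma TD_lt_TA {k : ℕ} (hk : 1 ≤ k) : TD k < TA k := by
  have hk' : (1 : ℚ) ≤ k := by exact_mod_cast hk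
  have := TD_le k
  rw [TA]
  nlinarith

lemma TAstar_lt_TD {k : ℕ} (hk : 3 ≤ k) : TAstar k < TD k := by
  have hk' : (3 : ℚ) ≤ k := by exact_mod_cast hk
  have := TAstar_le k
  have := le_TD k
  nlinarith

lemma TDstar_lt_TD {k : ℕ} (hk : 9 ≤ k) : TDstar k < TD k := by
  have hk' : (9 : ℚ) ≤ k := by exact_mod_cast hk
  have := TAstar_le k
  have := le_TD k
  rw [TDstar_eq_three_mul_TAstar]
  nlinarith

lemma TD_eq_TDstar_iff (k : ℕ) : TD k = TDstar k ↔ k = 7 ∨ k = 8 := by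
  rcases le_or_gt 9 k with hk | hk
  · exact ⟨fun h => absurd h (TDstar_lt_TD hk).ne', by omega⟩
  · interval_cases k <;> norm_num [TD, TDstar]

/-- For every natural `k ≥ 3` with `k ≠ 7` and `k ≠ 8`, the four rationals
`T_A(k), T_D(k), T_{A*}(k), T_{D*}(k)` are pairwise distinct.  Moreover, for `k = 7`
and `k = 8` one has `T_D(k) = T_{D*}(k)`, while all other pairs are distinct. -/
theorem stmt9 (k : ℕ) (hk : 3 ≤ k) :
    ((k ≠ 7 ∧ k ≠ 8) →
      (TA k ≠ TD k ∧ TA k ≠ TAstar k ∧ TA k ≠ TDstar k ∧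
        TD k ≠ TAstar k ∧ TD k ≠ TDstar k ∧ TAstar k ≠ TDstar k)) ∧
    ((k = 7 ∨ k = 8) →
      (TD k = TDstar k ∧ TA k ≠ TD k ∧ TA k ≠ TAstar k ∧ TA k ≠ TDstar k ∧
        TD k ≠ TAstar k ∧ TAstar k ≠ TDstar k)) := by
  have hAstar_Dstar := TAstar_lt_TDstar k
  have hDstar_A := TDstar_lt_TA hk
  have hD_A := TD_lt_TA (by omega : 1 ≤ k)
  have hAstar_D := TAstar_lt_TD hk
  have hD_Dstar := TD_eq_TDstar_iff k
  refine ⟨fun hk78 => ⟨hD_A.ne', (hAstar_Dstar.trans hDstar_A).ne', hDstar_A.ne', hAstar_D.ne',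
      mt hD_Dstar.1 (by omega), hAstar_Dstar.ne⟩,
    fun hk78 => ⟨hD_Dstar.2 hk78, hD_A.ne', (hAstar_Dstar.trans hDstar_A).ne', hDstar_A.ne',
      hAstar_D.ne', hAstar_Dstar.ne⟩⟩
end
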